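/- Let A, C_1, …, C_r ∈ ℝ^{n×n}, B, D_1, …, D_r ∈ ℝ^{n×m}, E_0, …, E_r ∈ ℝ^{q×n}, R a real symmetric positive definite m×m matrix, and T ∈ ℝ^{m×n}. For 0 ≤ l ≤ r define Ê_l ∈ ℝ^{((q+m)(r+1))×n} as the stacked block matrix whose first r+1 blocks are q×n, all zero except the (l+1)-st block which equals E_l, and whose last r+1 blocks are m×n, all zero except the (l+1)-st block which equals √((1/(r+1))·R)·T, where √ denotes the unique symmetric positive definite square root. If the system [E_0, …, E_r; A, C_1, …, C_r] is stochastically detectable, then the system [Ê_0, …, Ê_r; A + B T, C_1 + D_1 T, …, C_r + D_r T] is stochastically detectable. -/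

import Mathlib

open Matrix

noncomputable section

/-- Mean-square stability of the tuple `(F, G_1, …, G_r)` via the Lyapunov characterization. -/
def MSStable {n r : ℕ} (F : Matrix (Fin n) (Fin n) ℝ)
    (G : Fin r → Matrix (Fin n) (Fin n) ℝ) : Prop :=
  ∃ X : Matrix (Fin n) (Fin n) ℝ, X.PosDef ∧
    (-(X * F + Fᵀ * X + ∑ l, (G l)ᵀ * X * G l)).PosDef

/-- Stochastic detectability of the system `[E_0, …, E_r; F, G_1, …, G_r]`,
with observation matrices of row index type `p`. -/
def StochDetectable {n r : ℕ} {p : Type*} [Fintype p]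
    (E0 : Matrix p (Fin n) ℝ) (E : Fin r → Matrix p (Fin n) ℝ)
    (F : Matrix (Fin n) (Fin n) ℝ) (G : Fin r → Matrix (Fin n) (Fin n) ℝ) : Prop :=
  ∃ Θ : Matrix (Fin n) p ℝ, MSStable (F + Θ * E0) (fun l => G l + Θ * E l)

/-- The stacked observation matrix `Ê_l`: the first `r+1` blocks are `q × n`, all zero
except the `(l+1)`-st which equals `E_l` (here `Efull l`), and the last `r+1` blocks are
`m × n`, all zero except the `(l+1)`-st which equals `M` (to be taken as `√((1/(r+1))·R)·T`). -/
def Ehat {n m q r : ℕ} (Efull : Fin (r + 1) → Matrix (Fin q) (Fin n) ℝ)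
    (M : Matrix (Fin m) (Fin n) ℝ) (l : Fin (r + 1)) :
    Matrix ((Fin (r + 1) × Fin q) ⊕ (Fin (r + 1) × Fin m)) (Fin n) ℝ :=
  fun i j =>
    match i with
    | Sum.inl (k, a) => if k = l then Efull l a j else 0
    | Sum.inr (k, a) => if k = l then M a j else 0

/-!
Given an output injection `Θ` for the original system, the stacked gain `[Θ ⋯ Θ | Ψ_0 ⋯ Ψ_r]`
with `Ψ_k = -K_k S⁻¹` (where `K_0 = B`, `K_k = D_k` and `S = √((1/(r+1))·R)`)
sees the extra output `S T` exactly in the `k`-th channel and cancels the feedback term `K_k T`.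
So the closed loops of the new system coincide with those of the original one.
-/

section StackedGain

variable {n m q r : ℕ}

def stackedGain (Θ : Matrix (Fin n) (Fin q) ℝ) (Ψ : Fin (r + 1) → Matrix (Fin n) (Fin m) ℝ) :
    Matrix (Fin n) ((Fin (r + 1) × Fin q) ⊕ (Fin (r + 1) × Fin m)) ℝ :=
  Matrix.of fun i j =>
    match j with
    | Sum.inl (_, a) => Θ i a
    | Sum.inr (k, a) => Ψ k i a

theorem stackedGain_mul_Ehat (Θ : Matrix (Fin n) (Fin q) ℝ)
    (Ψ : Fin (r + 1) → Matrix (Fin n) (Fin m) ℝ)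
    (Efull : Fin (r + 1) → Matrix (Fin q) (Fin n) ℝ) (M : Matrix (Fin m) (Fin n) ℝ)
    (l : Fin (r + 1)) :
    stackedGain Θ Ψ * Ehat Efull M l = Θ * Efull l + Ψ l * M := by
  ext i j
  simp only [mul_apply, Matrix.add_apply, Fintype.sum_sum_type, Fintype.sum_prod_type, stackedGain,
    Ehat, of_apply, mul_ite, mul_zero]
  rw [Finset.sum_comm, Finset.sum_comm (γ := Fin (r + 1))]
  simp

theorem stackedGain_mul_Ehat_of_isUnit {S : Matrix (Fin m) (Fin m) ℝ} (hS : IsUnit S.det)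
    (Θ : Matrix (Fin n) (Fin q) ℝ) (K : Fin (r + 1) → Matrix (Fin n) (Fin m) ℝ)
    (Efull : Fin (r + 1) → Matrix (Fin q) (Fin n) ℝ) (T : Matrix (Fin m) (Fin n) ℝ)
    (l : Fin (r + 1)) :
    stackedGain Θ (fun k => -K k * S⁻¹) * Ehat Efull (S * T) l = Θ * Efull l - K l * T := by
  rw [stackedGain_mul_Ehat, Matrix.neg_mul, Matrix.neg_mul, Matrix.mul_assoc,
    nonsing_inv_mul_cancel_left S T hS, sub_eq_add_neg]

end StackedGain

theorem statement8_general {n m q r : ℕ}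
    (A : Matrix (Fin n) (Fin n) ℝ) (C : Fin r → Matrix (Fin n) (Fin n) ℝ)
    (B : Matrix (Fin n) (Fin m) ℝ) (D : Fin r → Matrix (Fin n) (Fin m) ℝ)
    (E0 : Matrix (Fin q) (Fin n) ℝ) (E : Fin r → Matrix (Fin q) (Fin n) ℝ)
    (T : Matrix (Fin m) (Fin n) ℝ)
    (Sq : Matrix (Fin m) (Fin m) ℝ) (hSq : Sq.PosDef)
    (hdet : StochDetectable E0 E A C) :
    StochDetectable
      (Ehat (Fin.cases E0 E) (Sq * T) 0)
      (fun l : Fin r => Ehat (Fin.cases E0 E) (Sq * T) l.succ)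
      (A + B * T) (fun l => C l + D l * T) := by
  obtain ⟨Θ, hΘ⟩ := hdet
  have hSq_det : IsUnit Sq.det := isUnit_iff_ne_zero.2 hSq.det_pos.ne'
  refine ⟨stackedGain Θ (fun k => -(Fin.cases B D k : Matrix (Fin n) (Fin m) ℝ) * Sq⁻¹), ?_⟩
  have hgain := stackedGain_mul_Ehat_of_isUnit hSq_det Θ (Fin.cases B D) (Fin.cases E0 E) T
  simp only [hgain, Fin.cases_zero, Fin.cases_succ, add_add_sub_cancel]
  exact hΘ

/-- stochastic detectability is preserved under state feedback `T`, after
augmenting the observation matrices by the weighted feedback `√((1/(r+1))·R)·T`.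
Here `Sq` is the unique symmetric positive definite square root of `(1/(r+1))·R`. -/
theorem statement8 {n m q r : ℕ}
    (A : Matrix (Fin n) (Fin n) ℝ) (C : Fin r → Matrix (Fin n) (Fin n) ℝ)
    (B : Matrix (Fin n) (Fin m) ℝ) (D : Fin r → Matrix (Fin n) (Fin m) ℝ)
    (E0 : Matrix (Fin q) (Fin n) ℝ) (E : Fin r → Matrix (Fin q) (Fin n) ℝ)
    (R : Matrix (Fin m) (Fin m) ℝ) (hR : R.PosDef)
    (T : Matrix (Fin m) (Fin n) ℝ)
    (Sq : Matrix (Fin m) (Fin m) ℝ) (hSq : Sq.PosDef)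
    (hSqsq : Sq * Sq = ((r : ℝ) + 1)⁻¹ • R)
    (hdet : StochDetectable E0 E A C) :
    StochDetectable
      (Ehat (Fin.cases E0 E) (Sq * T) 0)
      (fun l : Fin r => Ehat (Fin.cases E0 E) (Sq * T) l.succ)
      (A + B * T) (fun l => C l + D l * T) :=
  statement8_general A C B D E0 E T Sq hSq hdet
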